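/- arXiv:2210.00967 — 2 statements merged into one kernel-verified Lean document; each statement's English description precedes it below -/
import Mathlib

section
/- Let k be an algebraically closed field of characteristic p > 0, n, e positive integers with p^n·e ≥ 3, Q(X, Y) ∈ k[X, Y] homogeneous of degree e with nonzero coefficient of Y^e, and F = Q(X^{p^n}, Y^{p^n}) − X^{p^n e − 1}·Y − Z^{p^n e − 1}·X ∈ k[X, Y, Z]. Then the polynomials F, ∂F/∂X, ∂F/∂Y, ∂F/∂Z have no common zero in k^3 other than (0, 0, 0); i.e. the projective plane curve {F = 0} ⊂ P^2 is smooth. Moreover, the only common projective zero of F and X is [0:0:1]. -/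
/-!
As `p ^ n = 0` in `k`, the term `Q(X^{p^n}, Y^{p^n})` has vanishing partial derivatives, and
`m = p^n e - 1` is `-1` in `k`; hence `∂F/∂Y = -X^m` and `∂F/∂X = X^{m-1} Y - Z^m`. On the line
`X = 0` the curve reads `c Y^{p^n e} = 0`, where `c ≠ 0` is the coefficient of `Y^e` in `Q`, so its
only point there is `[0:0:1]`; and a singular point lies on `X = 0` and then also has `Z = 0`.
-/

open MvPolynomial

namespace MvPolynomial

variable {R σ τ : Type*} [CommSemiring R]

theorem eval_aeval (g : σ → MvPolynomial τ R) (v : τ → R) (Q : MvPolynomial σ R) :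
    eval v (aeval g Q) = eval (fun j ↦ eval v (g j)) Q := by
  simpa [coe_aeval_eq_eval] using comp_aeval_apply (f := g) (aeval v) Q

theorem pderiv_aeval_eq_zero {i : τ} {g : σ → MvPolynomial τ R} (hg : ∀ j, pderiv i (g j) = 0)
    (Q : MvPolynomial σ R) : pderiv i (aeval g Q) = 0 := by
  induction Q using MvPolynomial.induction_on with
  | C a => rw [aeval_C, algebraMap_eq, pderiv_C]
  | add f f' hf hf' => rw [map_add, map_add, hf, hf', add_zero]
  | mul_X f j hf => rw [map_mul, pderiv_mul, hf, aeval_X, hg, mul_zero, zero_mul, add_zero]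

theorem pderiv_pow_eq_zero_of_cast_eq_zero (i : σ) (f : MvPolynomial σ R) {q : ℕ}
    (hq : (q : R) = 0) : pderiv i (f ^ q) = 0 := by
  rw [pderiv_pow, ← map_natCast C, hq, C_0, zero_mul, zero_mul]

theorem IsHomogeneous.eval_piSingle [Fintype σ] [DecidableEq σ] {Q : MvPolynomial σ R} {e : ℕ}
    (hQ : Q.IsHomogeneous e) (i : σ) (t : R) :
    eval (Pi.single i t) Q = Q.coeff (Finsupp.single i e) * t ^ e := by
  rw [eval_eq', Finset.sum_eq_single (Finsupp.single i e)]
  · simp [Finsupp.single_apply, Pi.single_apply]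
  · intro d hd hne
    obtain ⟨j, hji, hdj⟩ : ∃ j ≠ i, d j ≠ 0 := by
      by_contra! hzero
      have hd_single : d = Finsupp.single i (d i) := by
        ext j
        by_cases hj : j = i
        · simp [hj]
        · rw [hzero j hj, Finsupp.single_eq_of_ne hj]
      have hdeg := hQ (mem_support_iff.mp hd)
      rw [hd_single] at hdeg
      simp only [Finsupp.weight_apply, Pi.one_apply, smul_eq_mul, mul_one,
        Finsupp.sum_single_index] at hdeg
      exact hne (hd_single.trans (by rw [hdeg]))
    rw [Finset.prod_eq_zero (Finset.mem_univ j), mul_zero]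
    rw [Pi.single_eq_of_ne hji, zero_pow hdj]
  · intro h
    rw [notMem_support_iff.mp h, zero_mul]

end MvPolynomial

section TangoCurve

variable {k : Type*} [Field k]

noncomputable def tangoPolynomial (q e : ℕ) (Q : MvPolynomial (Fin 2) k) : MvPolynomial (Fin 3) k :=
  aeval ![X 0 ^ q, X 1 ^ q] Q - X 0 ^ (q * e - 1) * X 1 - X 2 ^ (q * e - 1) * X 0

variable {q e : ℕ} {Q : MvPolynomial (Fin 2) k}

theorem eval_tangoPolynomial (v : Fin 3 → k) :
    eval v (tangoPolynomial q e Q) =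
      eval ![v 0 ^ q, v 1 ^ q] Q - v 0 ^ (q * e - 1) * v 1 - v 2 ^ (q * e - 1) * v 0 := by
  have hargs : (fun j ↦ eval v (![X 0 ^ q, X 1 ^ q] j)) = ![v 0 ^ q, v 1 ^ q] := by
    ext j
    fin_cases j <;> simp
  simp only [tangoPolynomial, map_sub, map_mul, map_pow, eval_X, eval_aeval, hargs]

theorem pderiv_aeval_pow_X_eq_zero (hq : (q : k) = 0) (i : Fin 3) :
    pderiv i (aeval ![(X 0 : MvPolynomial (Fin 3) k) ^ q, X 1 ^ q] Q) = 0 :=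
  pderiv_aeval_eq_zero
    (fun j ↦ by fin_cases j <;> exact pderiv_pow_eq_zero_of_cast_eq_zero _ _ hq) Q

theorem pderiv_zero_tangoPolynomial (hq : (q : k) = 0) (hqe : 0 < q * e) :
    pderiv 0 (tangoPolynomial q e Q) = X 0 ^ (q * e - 2) * X 1 - X 2 ^ (q * e - 1) := by
  have hm : ((q * e - 1 : ℕ) : MvPolynomial (Fin 3) k) = -1 := by
    rw [Nat.cast_sub hqe, Nat.cast_mul, ← map_natCast C q, hq, C_0, zero_mul, Nat.cast_one,
      zero_sub]
  simp only [tangoPolynomial, map_sub, pderiv_aeval_pow_X_eq_zero hq, pderiv_mul, pderiv_pow,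
    pderiv_X_self, pderiv_X_of_ne (show (1 : Fin 3) ≠ 0 by decide),
    pderiv_X_of_ne (show (2 : Fin 3) ≠ 0 by decide), hm, show q * e - 1 - 1 = q * e - 2 by omega]
  ring

theorem pderiv_one_tangoPolynomial (hq : (q : k) = 0) :
    pderiv 1 (tangoPolynomial q e Q) = -X 0 ^ (q * e - 1) := by
  simp only [tangoPolynomial, map_sub, pderiv_aeval_pow_X_eq_zero hq, pderiv_mul, pderiv_pow,
    pderiv_X_self, pderiv_X_of_ne (show (0 : Fin 3) ≠ 1 by decide),
    pderiv_X_of_ne (show (2 : Fin 3) ≠ 1 by decide)]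
  ring

theorem apply_one_eq_zero_of_eval_tangoPolynomial_eq_zero {v : Fin 3 → k}
    (hQ : Q.IsHomogeneous e) (hYe : Q.coeff (Finsupp.single 1 e) ≠ 0) (hqe : 2 ≤ q * e)
    (hv : eval v (tangoPolynomial q e Q) = 0) (hv0 : v 0 = 0) : v 1 = 0 := by
  have hline : ![(0 : k), v 1 ^ q] = Pi.single 1 (v 1 ^ q) := by
    ext j
    fin_cases j <;> simp
  rw [eval_tangoPolynomial, hv0, zero_pow (show q * e - 1 ≠ 0 by omega),
    zero_pow (show q ≠ 0 by rintro rfl; omega), hline, hQ.eval_piSingle, zero_mul, mul_zero,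
    sub_zero, sub_zero, ← pow_mul] at hv
  exact (pow_eq_zero_iff (by omega)).mp ((mul_eq_zero.mp hv).resolve_left hYe)

end TangoCurve

theorem statement14_general (k : Type) [Field k]
    (p : ℕ) [CharP k p]
    (n e : ℕ) (hn : 0 < n) (h3 : 3 ≤ p ^ n * e)
    (Q : MvPolynomial (Fin 2) k) (hQ : Q.IsHomogeneous e)
    (hYe : Q.coeff (Finsupp.single 1 e) ≠ 0)
    (F : MvPolynomial (Fin 3) k)
    (hF : F = aeval ![(X 0 : MvPolynomial (Fin 3) k) ^ p ^ n,
        (X 1 : MvPolynomial (Fin 3) k) ^ p ^ n] Q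
      - X 0 ^ (p ^ n * e - 1) * X 1 - X 2 ^ (p ^ n * e - 1) * X 0) :
    (∀ v : Fin 3 → k, eval v F = 0 →
      eval v (pderiv 0 F) = 0 → eval v (pderiv 1 F) = 0 →
      eval v (pderiv 2 F) = 0 → v = 0) ∧
    (∀ v : Fin 3 → k, v ≠ 0 → eval v F = 0 → v 0 = 0 →
      ∃ c : k, c ≠ 0 ∧ v = c • ![0, 0, 1]) := by
  obtain rfl : F = tangoPolynomial (p ^ n) e Q := hF
  have hq : ((p ^ n : ℕ) : k) = 0 := by
    rw [Nat.cast_pow, CharP.cast_eq_zero, zero_pow hn.ne']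
  have hm : p ^ n * e - 1 ≠ 0 := by omega
  have hv1_of : ∀ v : Fin 3 → k, eval v (tangoPolynomial (p ^ n) e Q) = 0 → v 0 = 0 → v 1 = 0 :=
    fun _ ↦ apply_one_eq_zero_of_eval_tangoPolynomial_eq_zero hQ hYe (by omega)
  constructor
  · intro v hv hv_d0 hv_d1 _
    rw [pderiv_one_tangoPolynomial hq, map_neg, map_pow, eval_X, neg_eq_zero,
      pow_eq_zero_iff hm] at hv_d1
    have hv1 := hv1_of v hv hv_d1
    rw [pderiv_zero_tangoPolynomial hq (by omega)] at hv_d0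
    simp only [map_sub, map_mul, map_pow, eval_X, hv1, mul_zero, zero_sub, neg_eq_zero,
      pow_eq_zero_iff hm] at hv_d0
    ext i
    fin_cases i <;> assumption
  · intro v hv_ne hv hv0
    have hv1 := hv1_of v hv hv0
    have hv2 : v 2 ≠ 0 := fun hv2 ↦ hv_ne (by ext i; fin_cases i <;> assumption)
    exact ⟨v 2, hv2, by ext i; fin_cases i <;> simp [hv0, hv1]⟩

open MvPolynomial in
/-- smoothness of the Tango curves of Example 2.2, via the
Jacobian criterion.  Let `k` be an algebraically closed field of
characteristic `p > 0`, `n, e ≥ 1` with `p^n·e ≥ 3`, `Q(X, Y)` homogeneous of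
degree `e` with nonzero coefficient of `Y^e`, and
`F = Q(X^{p^n}, Y^{p^n}) - X^{p^n e - 1}·Y - Z^{p^n e - 1}·X`.
Then `F` and its three formal partial derivatives have no common zero in
`k³ \ {0}`; i.e. the projective plane curve `{F = 0} ⊆ P²` is smooth.
Moreover, the only common projective zero of `F` and `X` is `[0:0:1]`. -/
theorem statement14 (k : Type) [Field k] [IsAlgClosed k]
    (p : ℕ) [Fact p.Prime] [CharP k p]
    (n e : ℕ) (hn : 0 < n) (he : 0 < e) (h3 : 3 ≤ p ^ n * e)
    (Q : MvPolynomial (Fin 2) k) (hQ : Q.IsHomogeneous e)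
    (hYe : Q.coeff (Finsupp.single 1 e) ≠ 0)
    (F : MvPolynomial (Fin 3) k)
    (hF : F = aeval ![(X 0 : MvPolynomial (Fin 3) k) ^ p ^ n,
        (X 1 : MvPolynomial (Fin 3) k) ^ p ^ n] Q
      - X 0 ^ (p ^ n * e - 1) * X 1 - X 2 ^ (p ^ n * e - 1) * X 0) :
    (∀ v : Fin 3 → k, eval v F = 0 →
      eval v (pderiv 0 F) = 0 → eval v (pderiv 1 F) = 0 →
      eval v (pderiv 2 F) = 0 → v = 0) ∧
    (∀ v : Fin 3 → k, v ≠ 0 → eval v F = 0 → v 0 = 0 →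
      ∃ c : k, c ≠ 0 ∧ v = c • ![0, 0, 1]) :=
  statement14_general k p n e hn h3 Q hQ hYe F hF
end

section
/- Let k be an algebraically closed field of characteristic p > 0, n, e positive integers with p^n·e ≥ 3, and Q(X, Y) ∈ k[X, Y] homogeneous of degree e with nonzero coefficient of Y^e. Let A = k[x, y]/(Q(x^{p^n}, y^{p^n}) − x^{p^n e − 1}·y − x) and assume A is an integral domain with x ≠ 0 and y ≠ 0 in A; let K = Frac(A). Let R(X, Y) ∈ k[X, Y] be the homogeneous polynomial of degree e obtained from Q by replacing each coefficient by its (unique) p^n-th root, so that R(x, y)^{p^n} = Q(x^{p^n}, y^{p^n}). Then in K, setting z_1 = 1/x and z_2 = x^{p^n e − 2}·y / (Q(x^{p^n}, y^{p^n})·y^{p^n e(p^n e − 3)}), one has the identity z_1 = (y^{e(p^n e − 3)})^{p^n}·z_2 + (R(x, y)^{−1})^{p^n}. -/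
/-!
In `K` the curve equation reads `Q(x^{p^n}, y^{p^n}) = x · (x^{p^n e - 2} y + 1)`, and in
characteristic `p` the coefficientwise `p^n`-th root gives `R(x, y)^{p^n} = Q(x^{p^n}, y^{p^n})`.
So the right-hand side is `(x^{p^n e - 2} y + 1) / Q(x^{p^n}, y^{p^n}) = 1/x`, provided
`x^{p^n e - 2} y + 1 ≠ 0`; this holds already in `A`, because the defining polynomial has no
constant term (`Q` is homogeneous of positive degree) while `x^{p^n e - 2} y + 1` has.
-/

open MvPolynomial in
/-- The affine equation `Q(x^{p^n}, y^{p^n}) - x^{p^n e - 1}·y - x` of the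
chart `Z = 1` of the plane `n`-Tango curve of Example 2.2 (variables
`X 0 = x = X/Z`, `X 1 = y = Y/Z`). -/
noncomputable abbrev tangoChartAtInftyPoly (k : Type) [Field k] (p n e : ℕ)
    (Q : MvPolynomial (Fin 2) k) : MvPolynomial (Fin 2) k :=
  aeval ![(X 0 : MvPolynomial (Fin 2) k) ^ p ^ n,
          (X 1 : MvPolynomial (Fin 2) k) ^ p ^ n] Q
    - X 0 ^ (p ^ n * e - 1) * X 1 - X 0

/-- The affine coordinate ring
`A = k[x, y]/(Q(x^{p^n}, y^{p^n}) - x^{p^n e - 1}·y - x)`. -/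
abbrev tangoChartAtInftyRing (k : Type) [Field k] (p n e : ℕ)
    (Q : MvPolynomial (Fin 2) k) : Type :=
  MvPolynomial (Fin 2) k ⧸ Ideal.span {tangoChartAtInftyPoly k p n e Q}

open MvPolynomial

theorem MvPolynomial.aeval_vecCons_X_pow {R : Type*} [CommSemiring R] (q : ℕ)
    (φ : MvPolynomial (Fin 2) R) : aeval ![X 0 ^ q, X 1 ^ q] φ = expand q φ := by
  rw [coe_expand, aeval_def]
  congr 1
  funext i
  fin_cases i <;> rfl

theorem MvPolynomial.pow_expChar_pow_eq_expand {σ R : Type*} [CommSemiring R] (p : ℕ)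
    [ExpChar R p] (n : ℕ) {φ ψ : MvPolynomial σ R}
    (hcoeff : ∀ m, φ.coeff m ^ p ^ n = ψ.coeff m) : φ ^ p ^ n = expand (p ^ n) ψ := by
  have hψ : map (iterateFrobenius R p n) φ = ψ := by
    ext m
    simp [coeff_map, iterateFrobenius_def, hcoeff]
  rw [← map_iterateFrobenius_expand, map_expand, hψ]

theorem Ideal.Quotient.mk_span_singleton_ne_zero {R S : Type*} [CommRing R] [CommRing S]
    (f : R →+* S) {a b : R} (ha : f a = 0) (hb : f b ≠ 0) :
    Ideal.Quotient.mk (Ideal.span {a}) b ≠ 0 := by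
  rw [Ne, Ideal.Quotient.eq_zero_iff_mem, Ideal.mem_span_singleton']
  rintro ⟨c, rfl⟩
  simp [ha] at hb

theorem constantCoeff_tangoChartAtInftyPoly {k : Type} [Field k] {p : ℕ} (hp : p ≠ 0)
    (n : ℕ) {e : ℕ} (he : e ≠ 0) {Q : MvPolynomial (Fin 2) k} (hQ : Q.IsHomogeneous e) :
    constantCoeff (tangoChartAtInftyPoly k p n e Q) = 0 := by
  have hQ0 : coeff 0 Q = 0 := hQ.coeff_eq_zero (by simpa using he.symm)
  simp only [map_sub, map_mul, map_pow, constantCoeff_X, aeval_vecCons_X_pow,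
    constantCoeff_eq, coeff_expand_zero _ (pow_ne_zero n hp), hQ0]
  simp

theorem inv_eq_pow_mul_div_add_inv {F : Type*} [Field F] {x y a Q : F} (M : ℕ)
    (hQ : Q = x * (a * y + 1)) (ha : a * y + 1 ≠ 0) :
    x⁻¹ = y ^ M * (a * y / (Q * y ^ M)) + Q⁻¹ := by
  have hcancel : y ^ M * (a * y / (Q * y ^ M)) = a * y / Q := by
    rcases eq_or_ne y 0 with rfl | hy
    · simp
    · field_simp
  rw [hcancel, inv_eq_one_div Q, ← add_div, hQ, div_mul_cancel_right₀ ha]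

open MvPolynomial in
theorem statement15_general (k : Type) [Field k]
    (p : ℕ) [Fact p.Prime] [CharP k p]
    (n e : ℕ) (h3 : 3 ≤ p ^ n * e)
    (Q R : MvPolynomial (Fin 2) k)
    (hQ : Q.IsHomogeneous e)
    (hRQ : ∀ m : Fin 2 →₀ ℕ, R.coeff m ^ p ^ n = Q.coeff m)
    [IsDomain (tangoChartAtInftyRing k p n e Q)] :
    let A := tangoChartAtInftyRing k p n e Q
    let K := FractionRing A
    let x : K := algebraMap A K
      (Ideal.Quotient.mk (Ideal.span {tangoChartAtInftyPoly k p n e Q}) (X 0))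
    let y : K := algebraMap A K
      (Ideal.Quotient.mk (Ideal.span {tangoChartAtInftyPoly k p n e Q}) (X 1))
    let Qxy : K := algebraMap A K
      (Ideal.Quotient.mk (Ideal.span {tangoChartAtInftyPoly k p n e Q})
        (aeval ![(X 0 : MvPolynomial (Fin 2) k) ^ p ^ n,
                 (X 1 : MvPolynomial (Fin 2) k) ^ p ^ n] Q))
    let Rxy : K := algebraMap A K
      (Ideal.Quotient.mk (Ideal.span {tangoChartAtInftyPoly k p n e Q})
        (aeval ![(X 0 : MvPolynomial (Fin 2) k),
                 (X 1 : MvPolynomial (Fin 2) k)] R))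
    let z1 : K := x⁻¹
    let z2 : K := x ^ (p ^ n * e - 2) * y /
      (Qxy * y ^ (p ^ n * e * (p ^ n * e - 3)))
    z1 = (y ^ (e * (p ^ n * e - 3))) ^ p ^ n * z2 + Rxy⁻¹ ^ p ^ n := by
  intro A K x y Qxy Rxy z1 z2
  have he : e ≠ 0 := by rintro rfl; simp at h3
  set N := p ^ n * e
  let π : MvPolynomial (Fin 2) k →+* K :=
    (algebraMap A K).comp (Ideal.Quotient.mk (Ideal.span {tangoChartAtInftyPoly k p n e Q}))
  have hx : π (X 0) = x := rfl
  have hy : π (X 1) = y := rfl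
  have hrel : Qxy = x * (x ^ (N - 2) * y + 1) := by
    have h : π (tangoChartAtInftyPoly k p n e Q) = 0 := by
      change algebraMap A K (Ideal.Quotient.mk _ _) = 0
      rw [Ideal.Quotient.mk_singleton_self, map_zero]
    simp only [tangoChartAtInftyPoly, map_sub, map_mul, map_pow, hx, hy] at h
    rw [sub_sub, sub_eq_zero] at h
    rw [show Qxy = _ from h, show N - 1 = N - 2 + 1 by omega]
    ring
  have hfrob : Rxy ^ p ^ n = Qxy := by
    change π _ ^ p ^ n = π _
    rw [aeval_vecCons_X_pow, ← map_pow, show ![X 0, X 1] = X by ext i; fin_cases i <;> rfl,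
      aeval_X_left_apply, pow_expChar_pow_eq_expand p n hRQ]
  have hne : x ^ (N - 2) * y + 1 ≠ 0 := by
    rw [← hx, ← hy, ← map_pow, ← map_mul, ← map_one π, ← map_add]
    exact (map_ne_zero_iff _ (IsFractionRing.injective A K)).mpr
      (Ideal.Quotient.mk_span_singleton_ne_zero constantCoeff
        (constantCoeff_tangoChartAtInftyPoly (Fact.out : p.Prime).ne_zero n he hQ) (by simp))
  rw [← pow_mul, show e * (N - 3) * p ^ n = N * (N - 3) by ring, inv_pow, hfrob]
  exact inv_eq_pow_mul_div_add_inv _ hrel hne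

open MvPolynomial in
/-- the cocycle identity of Example 2.2.  Let
`A = k[x, y]/(Q(x^{p^n}, y^{p^n}) - x^{p^n e - 1}·y - x)` be a domain with
`x ≠ 0 ≠ y`, `K = Frac(A)`, and let `R(X, Y)` be the homogeneous polynomial of
degree `e` whose coefficients are the `p^n`-th roots of those of `Q` (so
`R(x, y)^{p^n} = Q(x^{p^n}, y^{p^n})`).  Then, in `K`, setting `z₁ = 1/x` and
`z₂ = x^{p^n e - 2}·y / (Q(x^{p^n}, y^{p^n})·y^{p^n e(p^n e - 3)})`, one has
`z₁ = (y^{e(p^n e - 3)})^{p^n}·z₂ + (R(x, y)⁻¹)^{p^n}`. -/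
theorem statement15 (k : Type) [Field k] [IsAlgClosed k]
    (p : ℕ) [Fact p.Prime] [CharP k p]
    (n e : ℕ) (hn : 0 < n) (he : 0 < e) (h3 : 3 ≤ p ^ n * e)
    (Q R : MvPolynomial (Fin 2) k)
    (hQ : Q.IsHomogeneous e) (hYe : Q.coeff (Finsupp.single 1 e) ≠ 0)
    (hR : R.IsHomogeneous e)
    (hRQ : ∀ m : Fin 2 →₀ ℕ, R.coeff m ^ p ^ n = Q.coeff m)
    [IsDomain (tangoChartAtInftyRing k p n e Q)]
    (hx : (Ideal.Quotient.mk (Ideal.span {tangoChartAtInftyPoly k p n e Q})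
      (X 0) : tangoChartAtInftyRing k p n e Q) ≠ 0)
    (hy : (Ideal.Quotient.mk (Ideal.span {tangoChartAtInftyPoly k p n e Q})
      (X 1) : tangoChartAtInftyRing k p n e Q) ≠ 0) :
    let A := tangoChartAtInftyRing k p n e Q
    let K := FractionRing A
    let x : K := algebraMap A K
      (Ideal.Quotient.mk (Ideal.span {tangoChartAtInftyPoly k p n e Q}) (X 0))
    let y : K := algebraMap A K
      (Ideal.Quotient.mk (Ideal.span {tangoChartAtInftyPoly k p n e Q}) (X 1))
    let Qxy : K := algebraMap A K
      (Ideal.Quotient.mk (Ideal.span {tangoChartAtInftyPoly k p n e Q})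
        (aeval ![(X 0 : MvPolynomial (Fin 2) k) ^ p ^ n,
                 (X 1 : MvPolynomial (Fin 2) k) ^ p ^ n] Q))
    let Rxy : K := algebraMap A K
      (Ideal.Quotient.mk (Ideal.span {tangoChartAtInftyPoly k p n e Q})
        (aeval ![(X 0 : MvPolynomial (Fin 2) k),
                 (X 1 : MvPolynomial (Fin 2) k)] R))
    let z1 : K := x⁻¹
    let z2 : K := x ^ (p ^ n * e - 2) * y /
      (Qxy * y ^ (p ^ n * e * (p ^ n * e - 3)))
    z1 = (y ^ (e * (p ^ n * e - 3))) ^ p ^ n * z2 + Rxy⁻¹ ^ p ^ n :=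
  statement15_general k p n e h3 Q R hQ hRQ
end
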